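/- Let n ≥ 2 and let G be the fly-swatter: the complete graph on vertices v_0, v_1, …, v_n with an infinite tail attached at v_0. For every 1 ≤ p < ∞, the set of eigenvalues of the shift operator S on ℓ^p(G) is exactly {−1, b + 1/b}, where b = −1/2 + (1/2)√((n+3)/(n−1)). -/

import Mathlib

/-!
Along the tail, `g k = f(u_{k+1})` for an eigenfunction `f` with eigenvalue `z` obeys
`g (k + 2) = z g (k + 1) - g k`. If `f ∈ ℓ^p` then `g → 0`, which forces `g` to be geometric
with ratio the root `w` of `w² - z w + 1` of modulus at most `1`. For `z ≠ -1` the equations at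
`v_1, …, v_n` make `f` constant there, and the equations at `v_0` and `u_1` then force
`(n - 1)(w² + w) = 1`. Of its two roots `b` and `-1 - b` only `b` has modulus at most `1`, so
`z = w + 1/w = b + 1/b`. Conversely, `δ_{v_1} - δ_{v_2}` is a `-1`-eigenfunction, and
`f(v_0) = n b`, `f(v_j) = 1`, continued along the tail with ratio `b`, is a
`(b + 1/b)`-eigenfunction.
-/

/-- The shift (adjacency) operator: `(Sf)(u) = ∑_{v ~ u} f(v)`. -/
noncomputable def shiftOp {V : Type*} (G : SimpleGraph V) (f : V → ℂ) (u : V) : ℂ :=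
  ∑ᶠ v ∈ G.neighborSet u, f v

/-- Membership in ℓ^p: `∑_{v} |f(v)|^p < ∞`. -/
def memlp {V : Type*} (f : V → ℂ) (p : ℝ) : Prop :=
  Summable fun v => ‖f v‖ ^ p

/-- Base relation for the fly-swatter: `Sum.inl j` is the complete-graph vertex `v_j`
(`j = 0, …, n`) and `Sum.inr k` is the tail vertex `u_{k+1}` (`k = 0, 1, 2, …`). -/
def flyRel (n : ℕ) : (Fin (n + 1) ⊕ ℕ) → (Fin (n + 1) ⊕ ℕ) → Prop
  | Sum.inl i, Sum.inl j => i ≠ j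
  | Sum.inl i, Sum.inr k => (i : ℕ) = 0 ∧ k = 0
  | Sum.inr k, Sum.inr l => l = k + 1
  | _, _ => False

/-- The fly-swatter: the complete graph on `v_0, …, v_n` together with the ray
`u_1 ~ u_2 ~ ⋯` and the edge `v_0 ~ u_1`. -/
def flyswatter (n : ℕ) : SimpleGraph (Fin (n + 1) ⊕ ℕ) :=
  SimpleGraph.fromRel (flyRel n)

open Sum Filter Topology

section Flyswatter

variable {n : ℕ}

lemma flyswatter_adj {x y : Fin (n + 1) ⊕ ℕ} :
    (flyswatter n).Adj x y ↔ x ≠ y ∧ (flyRel n x y ∨ flyRel n y x) := by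
  simp [flyswatter, SimpleGraph.fromRel_adj]

lemma neighborSet_flyswatter_inl {j : Fin (n + 1)} (hj : j ≠ 0) :
    (flyswatter n).neighborSet (inl j) =
      ↑((Finset.univ.erase j).image (inl : _ → Fin (n + 1) ⊕ ℕ)) := by
  ext (i | k)
  · simp [flyswatter_adj, flyRel, eq_comm, and_comm]
  · simp [flyswatter_adj, flyRel, hj]

lemma neighborSet_flyswatter_inl_zero :
    (flyswatter n).neighborSet (inl 0) =
      ↑((Finset.univ.erase (0 : Fin (n + 1))).image inl ∪ {inr 0}) := by
  ext (i | k)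
  · simp [flyswatter_adj, flyRel, eq_comm]
  · simp [flyswatter_adj, flyRel]

lemma neighborSet_flyswatter_inr_zero :
    (flyswatter n).neighborSet (inr 0) = ↑({inl 0, inr 1} : Finset (Fin (n + 1) ⊕ ℕ)) := by
  ext (i | k)
  · simp [flyswatter_adj, flyRel]
  · simp [flyswatter_adj, flyRel]
    omega

lemma neighborSet_flyswatter_inr_succ (k : ℕ) :
    (flyswatter n).neighborSet (inr (k + 1)) =
      ↑({inr k, inr (k + 2)} : Finset (Fin (n + 1) ⊕ ℕ)) := by
  ext (i | l)
  · simp [flyswatter_adj, flyRel]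
  · simp [flyswatter_adj, flyRel]
    omega

variable (f : Fin (n + 1) ⊕ ℕ → ℂ)

lemma shiftOp_flyswatter_inl {j : Fin (n + 1)} (hj : j ≠ 0) :
    shiftOp (flyswatter n) f (inl j) = ∑ i, f (inl i) - f (inl j) := by
  rw [shiftOp, neighborSet_flyswatter_inl hj, finsum_mem_coe_finset,
    Finset.sum_image (fun _ _ _ _ h => inl_injective h),
    Finset.sum_erase_eq_sub (Finset.mem_univ j)]

lemma shiftOp_flyswatter_inl_zero :
    shiftOp (flyswatter n) f (inl 0) = ∑ i, f (inl i) - f (inl 0) + f (inr 0) := by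
  rw [shiftOp, neighborSet_flyswatter_inl_zero, finsum_mem_coe_finset,
    Finset.sum_union (by simp), Finset.sum_image (fun _ _ _ _ h => inl_injective h),
    Finset.sum_erase_eq_sub (Finset.mem_univ 0), Finset.sum_singleton]

lemma shiftOp_flyswatter_inr_zero :
    shiftOp (flyswatter n) f (inr 0) = f (inl 0) + f (inr 1) := by
  rw [shiftOp, neighborSet_flyswatter_inr_zero, finsum_mem_coe_finset,
    Finset.sum_pair (by simp)]

lemma shiftOp_flyswatter_inr_succ (k : ℕ) :
    shiftOp (flyswatter n) f (inr (k + 1)) = f (inr k) + f (inr (k + 2)) := by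
  rw [shiftOp, neighborSet_flyswatter_inr_succ, finsum_mem_coe_finset,
    Finset.sum_pair (by simp)]

lemma shiftOp_flyswatter_eq_smul_iff {z : ℂ} :
    (∀ x, shiftOp (flyswatter n) f x = z * f x) ↔
      (∀ j ≠ 0, ∑ i, f (inl i) - f (inl j) = z * f (inl j)) ∧
      ∑ i, f (inl i) - f (inl 0) + f (inr 0) = z * f (inl 0) ∧
      f (inl 0) + f (inr 1) = z * f (inr 0) ∧
      ∀ k, f (inr k) + f (inr (k + 2)) = z * f (inr (k + 1)) := by
  constructor
  · intro h
    refine ⟨fun j hj => ?_, ?_, ?_, fun k => ?_⟩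
    · rw [← shiftOp_flyswatter_inl f hj, h]
    · rw [← shiftOp_flyswatter_inl_zero, h]
    · rw [← shiftOp_flyswatter_inr_zero, h]
    · rw [← shiftOp_flyswatter_inr_succ, h]
  · rintro ⟨hclique, hhub, hfoot, htail⟩ (j | _ | k)
    · by_cases hj : j = 0
      · subst hj
        rw [shiftOp_flyswatter_inl_zero, hhub]
      · rw [shiftOp_flyswatter_inl f hj, hclique j hj]
    · rw [shiftOp_flyswatter_inr_zero, hfoot]
    · rw [shiftOp_flyswatter_inr_succ, htail]

end Flyswatter

section Lp

variable {p : ℝ}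

lemma memlp_sum_iff {α β : Type*} [Finite α] {f : α ⊕ β → ℂ} :
    memlp f p ↔ memlp (f ∘ inr) p :=
  ⟨fun h => h.comp_injective inr_injective, fun h => Summable.sum _ Summable.of_finite h⟩

lemma tendsto_zero_of_memlp (hp : 0 < p) {g : ℕ → ℂ} (hg : memlp g p) :
    Tendsto g atTop (𝓝 0) := by
  rw [tendsto_zero_iff_norm_tendsto_zero]
  have h := hg.tendsto_atTop_zero.rpow_const (p := p⁻¹) (Or.inr (inv_nonneg.2 hp.le))
  rw [Real.zero_rpow (inv_ne_zero hp.ne')] at h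
  exact h.congr fun k => Real.rpow_rpow_inv (norm_nonneg _) hp.ne'

lemma memlp_geometric (hp : 0 < p) (c : ℂ) {r : ℂ} (hr : ‖r‖ < 1) :
    memlp (fun k : ℕ => c * r ^ k) p := by
  have hterm : ∀ k : ℕ, ‖c * r ^ k‖ ^ p = ‖c‖ ^ p * (‖r‖ ^ p) ^ k := fun k => by
    rw [norm_mul, norm_pow, Real.mul_rpow (norm_nonneg _) (by positivity),
      Real.rpow_pow_comm (norm_nonneg _)]
  simp only [memlp, hterm]
  exact (summable_geometric_of_lt_one (by positivity)
    (Real.rpow_lt_one (norm_nonneg _) hr hp)).mul_left _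

end Lp

section Recurrence

lemma exists_root_norm_le_one (z : ℂ) : ∃ w : ℂ, ‖w‖ ≤ 1 ∧ w ^ 2 - z * w + 1 = 0 := by
  obtain ⟨w, hw⟩ := exists_quadratic_eq_zero one_ne_zero
    (IsAlgClosed.exists_eq_mul_self (discrim 1 (-z) 1))
  have hw : w ^ 2 - z * w + 1 = 0 := by linear_combination hw
  have hw0 : w ≠ 0 := by rintro rfl; norm_num at hw
  by_cases h : ‖w‖ ≤ 1
  · exact ⟨w, h, hw⟩
  -- the roots are reciprocal to each other
  refine ⟨w⁻¹, ?_, ?_⟩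
  · rw [norm_inv]
    exact inv_le_one_of_one_le₀ (not_le.1 h).le
  · field_simp
    linear_combination hw

lemma succ_eq_mul_of_tendsto_zero {z w : ℂ} {g : ℕ → ℂ} (hw : w ^ 2 - z * w + 1 = 0)
    (hw1 : ‖w‖ ≤ 1) (hrec : ∀ k, g k + g (k + 2) = z * g (k + 1))
    (hg : Tendsto g atTop (𝓝 0)) (k : ℕ) : g (k + 1) = w * g k := by
  -- the Wronskian of `g` and `wᵏ`: constant, and bounded by `‖g (k + 1)‖ + ‖g k‖`, hence zero
  set W : ℕ → ℂ := fun k => g (k + 1) * w ^ k - g k * w ^ (k + 1)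
  have hW_const : ∀ k, W k = W 0 := by
    intro k
    induction k with
    | zero => rfl
    | succ k ih =>
      rw [← ih]
      linear_combination w ^ (k + 1) * hrec k - g (k + 1) * w ^ k * hw
  have hW_tendsto : Tendsto W atTop (𝓝 0) := by
    rw [tendsto_zero_iff_norm_tendsto_zero]
    refine squeeze_zero (fun _ => norm_nonneg _) (fun k => ?_)
      (by simpa using ((tendsto_add_atTop_iff_nat 1).2 hg).norm.add hg.norm)
    calc ‖W k‖ ≤ ‖g (k + 1)‖ * ‖w‖ ^ k + ‖g k‖ * ‖w‖ ^ (k + 1) := by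
          refine (norm_sub_le _ _).trans_eq ?_
          simp only [norm_mul, norm_pow]
      _ ≤ ‖g (k + 1)‖ + ‖g k‖ := by
          gcongr
          · exact mul_le_of_le_one_right (norm_nonneg _) (pow_le_one₀ (norm_nonneg _) hw1)
          · exact mul_le_of_le_one_right (norm_nonneg _) (pow_le_one₀ (norm_nonneg _) hw1)
  have hW : W k = 0 := (hW_const k).trans
    (tendsto_nhds_unique (tendsto_const_nhds.congr fun k => (hW_const k).symm) hW_tendsto)
  have hw0 : w ≠ 0 := by rintro rfl; norm_num at hw
  apply mul_right_cancel₀ (pow_ne_zero k hw0)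
  linear_combination hW

end Recurrence

noncomputable def flyswatterRoot (n : ℕ) : ℝ :=
  -1 / 2 + Real.sqrt (((n : ℝ) + 3) / ((n : ℝ) - 1)) / 2

section Root

variable {n : ℕ}

lemma flyswatterRoot_pos (hn : 2 ≤ n) : 0 < flyswatterRoot n := by
  have hn1 : (1 : ℝ) < n := by exact_mod_cast hn
  have : 1 < Real.sqrt (((n : ℝ) + 3) / ((n : ℝ) - 1)) := by
    rw [Real.lt_sqrt zero_le_one, one_pow, one_lt_div (by linarith)]
    linarith
  unfold flyswatterRoot
  linarith

lemma flyswatterRoot_quadratic (hn : 2 ≤ n) :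
    ((n : ℝ) - 1) * (flyswatterRoot n ^ 2 + flyswatterRoot n) = 1 := by
  have hn1 : (0 : ℝ) < n - 1 := by
    have : (2 : ℝ) ≤ n := by exact_mod_cast hn
    linarith
  have hs := Real.sq_sqrt (div_pos (by linarith : (0 : ℝ) < n + 3) hn1).le
  field_simp at hs
  unfold flyswatterRoot
  linear_combination hs / 4

lemma flyswatterRoot_lt_one (hn : 2 ≤ n) : flyswatterRoot n < 1 := by
  have hpos := flyswatterRoot_pos hn
  have hq := flyswatterRoot_quadratic hn
  have : (2 : ℝ) ≤ n := by exact_mod_cast hn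
  nlinarith

lemma eq_flyswatterRoot_or_eq (hn : 2 ≤ n) {w : ℂ} (hw : ((n : ℂ) - 1) * (w ^ 2 + w) = 1) :
    w = flyswatterRoot n ∨ w = -1 - flyswatterRoot n := by
  have hn1 : (n : ℂ) - 1 ≠ 0 := by
    rw [sub_ne_zero, ← Nat.cast_one, Ne, Nat.cast_inj]
    omega
  have hb : ((n : ℂ) - 1) * ((flyswatterRoot n : ℂ) ^ 2 + flyswatterRoot n) = 1 := by
    exact_mod_cast flyswatterRoot_quadratic hn
  have h : ((n : ℂ) - 1) * ((w - flyswatterRoot n) * (w - (-1 - flyswatterRoot n))) = 0 := by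
    linear_combination hw - hb
  simpa [hn1, sub_eq_zero] using h

end Root

section Eigenvalues

variable {n : ℕ} {p : ℝ}

lemma exists_eigenfunction_neg_one (hn : 2 ≤ n) (hp : p ≠ 0) :
    ∃ f : Fin (n + 1) ⊕ ℕ → ℂ, f ≠ 0 ∧ memlp f p ∧
      ∀ x, shiftOp (flyswatter n) f x = -1 * f x := by
  set i : Fin (n + 1) := ⟨1, by omega⟩
  set j : Fin (n + 1) := ⟨2, by omega⟩
  have hij : i ≠ j := by simp [i, j, Fin.ext_iff]
  have hi : i ≠ 0 := by simp [i, Fin.ext_iff]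
  have hj : j ≠ 0 := by simp [j, Fin.ext_iff]
  refine ⟨Sum.elim (Pi.single i 1 - Pi.single j 1) 0, fun h => ?_, ?_, ?_⟩
  · simpa [hij] using congrFun h (inl i)
  · rw [memlp_sum_iff, Sum.elim_comp_inr]
    simp [memlp, Real.zero_rpow hp]
  · refine (shiftOp_flyswatter_eq_smul_iff _).2 ⟨fun k _ => ?_, ?_, ?_, fun _ => ?_⟩
    · simp [Finset.sum_sub_distrib]
    · simp [Finset.sum_sub_distrib, Pi.single_apply, hi.symm, hj.symm]
    · simp [hi.symm, hj.symm]
    · simp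

lemma exists_eigenfunction_flyswatterRoot (hn : 2 ≤ n) (hp : 0 < p) :
    ∃ f : Fin (n + 1) ⊕ ℕ → ℂ, f ≠ 0 ∧ memlp f p ∧
      ∀ x, shiftOp (flyswatter n) f x =
        ((flyswatterRoot n : ℂ) + 1 / (flyswatterRoot n : ℂ)) * f x := by
  have hq : ((n : ℂ) - 1) * ((flyswatterRoot n : ℂ) ^ 2 + flyswatterRoot n) = 1 := by
    exact_mod_cast flyswatterRoot_quadratic hn
  set b : ℂ := (flyswatterRoot n : ℂ)
  have hb0 : b ≠ 0 := Complex.ofReal_ne_zero.2 (flyswatterRoot_pos hn).ne'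
  have hb1 : ‖b‖ < 1 := by
    rw [Complex.norm_real, Real.norm_of_nonneg (flyswatterRoot_pos hn).le]
    exact flyswatterRoot_lt_one hn
  refine ⟨Sum.elim (fun i => if i = 0 then n * b else 1) (fun k => n * b ^ 2 * b ^ k),
    fun h => ?_, memlp_sum_iff.2 (memlp_geometric hp _ hb1), ?_⟩
  · have h1 := congrFun h (inl ⟨1, by omega⟩)
    rw [Sum.elim_inl, if_neg (Fin.ne_of_val_ne one_ne_zero), Pi.zero_apply] at h1
    exact one_ne_zero h1
  have hT : ∑ i : Fin (n + 1), (if i = 0 then n * b else 1) = n * b + n := by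
    simp [Fin.sum_univ_succ, Fin.succ_ne_zero]
  refine (shiftOp_flyswatter_eq_smul_iff _).2 ⟨fun j hj => ?_, ?_, ?_, fun k => ?_⟩
  · simp only [Sum.elim_inl, hT, if_neg hj]
    field_simp
    linear_combination hq
  all_goals simp only [Sum.elim_inl, Sum.elim_inr, hT, if_pos]
  all_goals field_simp
  all_goals ring

lemma quadratic_of_eigenfunction {f : Fin (n + 1) ⊕ ℕ → ℂ} {z w : ℂ} (hf : f ≠ 0)
    (heig : ∀ x, shiftOp (flyswatter n) f x = z * f x) (hw : w ^ 2 - z * w + 1 = 0)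
    (htail : ∀ k, f (inr (k + 1)) = w * f (inr k)) (hz : z ≠ -1) :
    ((n : ℂ) - 1) * (w ^ 2 + w) = 1 := by
  obtain ⟨hclique, hhub, hfoot, -⟩ := (shiftOp_flyswatter_eq_smul_iff f).1 heig
  have hz1 : z + 1 ≠ 0 := fun h => hz (eq_neg_of_add_eq_zero_left h)
  set T := ∑ i, f (inl i)
  obtain ⟨a, hTa⟩ : ∃ a, T = (z + 1) * a := ⟨T / (z + 1), (mul_div_cancel₀ T hz1).symm⟩
  have hconst : ∀ j ≠ 0, f (inl j) = a := fun j hj => by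
    refine mul_left_cancel₀ hz1 ?_
    linear_combination -hclique j hj + hTa
  have hT : T = f (inl 0) + n * a := by
    simp [T, Fin.sum_univ_succ, hconst _ (Fin.succ_ne_zero _)]
  have hfoot_eq : f (inr 0) = w * f (inl 0) := by
    rw [htail 0] at hfoot
    linear_combination -w * hfoot + f (inr 0) * hw
  have ha : a ≠ 0 := by
    rintro ha
    have h0 : f (inl 0) = 0 := by linear_combination -hT + hTa + (z + 1 - n) * ha
    have hg : ∀ k, f (inr k) = 0 := fun k => by
      induction k with
      | zero => rw [hfoot_eq, h0, mul_zero]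
      | succ k ih => rw [htail, ih, mul_zero]
    refine hf (funext fun x => ?_)
    rcases x with j | k
    · by_cases hj : j = 0
      · rw [hj, h0, Pi.zero_apply]
      · rw [hconst j hj, ha, Pi.zero_apply]
    · rw [hg, Pi.zero_apply]
  have hE : (n * w - (z + 1 - n)) * a = 0 := by
    linear_combination w * hhub - w * hT - w * hfoot_eq - f (inl 0) * hw - hT + hTa
  have hE' : (n : ℂ) * w = z + 1 - n := by
    linear_combination (mul_eq_zero.1 hE).resolve_right ha
  linear_combination w * hE' - hw

lemma eq_neg_one_or_eq_of_eigenfunction (hn : 2 ≤ n) (hp : 0 < p)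
    {f : Fin (n + 1) ⊕ ℕ → ℂ} {z : ℂ} (hf : f ≠ 0) (hfp : memlp f p)
    (heig : ∀ x, shiftOp (flyswatter n) f x = z * f x) :
    z = -1 ∨ z = (flyswatterRoot n : ℂ) + 1 / (flyswatterRoot n : ℂ) := by
  by_cases hz : z = -1
  · exact Or.inl hz
  obtain ⟨w, hw1, hw⟩ := exists_root_norm_le_one z
  have htail : ∀ k, f (inr (k + 1)) = w * f (inr k) :=
    succ_eq_mul_of_tendsto_zero hw hw1 ((shiftOp_flyswatter_eq_smul_iff f).1 heig).2.2.2
      (tendsto_zero_of_memlp hp (memlp_sum_iff.1 hfp))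
  rcases eq_flyswatterRoot_or_eq hn (quadratic_of_eigenfunction hf heig hw htail hz) with rfl | rfl
  · have hw0 : (flyswatterRoot n : ℂ) ≠ 0 := Complex.ofReal_ne_zero.2 (flyswatterRoot_pos hn).ne'
    right
    field_simp
    linear_combination -hw
  · have hre := Complex.abs_re_le_norm (-1 - (flyswatterRoot n : ℂ))
    simp only [Complex.sub_re, Complex.neg_re, Complex.one_re, Complex.ofReal_re] at hre
    rw [abs_of_neg (by linarith [flyswatterRoot_pos hn])] at hre
    linarith [flyswatterRoot_pos hn]

end Eigenvalues

/-- For `n ≥ 2`, the set of eigenvalues of the shift on `ℓ^p` of the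
fly-swatter (for any `1 ≤ p < ∞`) is exactly `{−1, b + 1/b}` where
`b = −1/2 + (1/2)√((n+3)/(n−1))`. -/
theorem stmt14 (n : ℕ) (hn : 2 ≤ n) (p : ℝ) (hp : 1 ≤ p) :
    {z : ℂ | ∃ f : (Fin (n + 1) ⊕ ℕ) → ℂ, f ≠ 0 ∧ memlp f p ∧
        ∀ x, shiftOp (flyswatter n) f x = z * f x}
      = {(-1 : ℂ),
          (((-1 / 2 + Real.sqrt (((n : ℝ) + 3) / ((n : ℝ) - 1)) / 2 : ℝ) : ℂ) +
            1 / ((-1 / 2 + Real.sqrt (((n : ℝ) + 3) / ((n : ℝ) - 1)) / 2 : ℝ) : ℂ))} := by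
  have hp0 : 0 < p := zero_lt_one.trans_le hp
  ext z
  constructor
  · rintro ⟨f, hf, hfp, heig⟩
    exact eq_neg_one_or_eq_of_eigenfunction hn hp0 hf hfp heig
  · rintro (rfl | rfl)
    · exact exists_eigenfunction_neg_one hn hp0.ne'
    · exact exists_eigenfunction_flyswatterRoot hn hp0
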